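/- arXiv:0909.5240 — 3 statements merged into one kernel-verified Lean document; each statement's English description precedes it below -/
import Mathlib

section
/- Let c = 1 and let r₂ : ℝ → ℝ³ be a trajectory that is Lipschitz with constant v₁ < 1 on (-∞, t] (i.e. for all s, s̃ ≤ t, |r₂(s) - r₂(s̃)| ≤ v₁|s - s̃|). Then for any r₁ ∈ ℝ³ and t ∈ ℝ there exists a unique τ ≤ t satisfying τ = t - |r₁ - r₂(τ)|. -/
/-! The retarded time is the fixed point of `τ ↦ t - ‖r₁ - r₂ τ‖` on `(-∞, t]`. Since the norm is
1-Lipschitz, this map inherits the Lipschitz constant `v₁ < 1` of `r₂`, so Banach's fixed point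
theorem applies on the complete set `(-∞, t]`. -/

open Set Function NNReal

theorem LipschitzOnWith.existsUnique_isFixedPt {α : Type*} [MetricSpace α] {f : α → α}
    {s : Set α} {K : ℝ≥0} (hK : K < 1) (hf : LipschitzOnWith K f s) (hs : IsComplete s)
    (hne : s.Nonempty) (hfs : MapsTo f s s) : ∃! x, x ∈ s ∧ IsFixedPt f x := by
  have : CompleteSpace s := hs.completeSpace_coe
  have : Nonempty s := hne.to_subtype
  have hc : ContractingWith K (hfs.restrict f s s) := ⟨hK, hf.mapsToRestrict hfs⟩
  refine ⟨hc.fixedPoint, ⟨Subtype.prop _, congrArg Subtype.val hc.fixedPoint_isFixedPt⟩, ?_⟩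
  rintro x ⟨hxs, hx⟩
  exact congrArg Subtype.val (hc.fixedPoint_unique (x := ⟨x, hxs⟩) (Subtype.ext hx))

section RetardedTime

variable {E : Type*} [SeminormedAddCommGroup E] {r : ℝ → E} {s : Set ℝ} {K : ℝ≥0}

theorem LipschitzOnWith.const_sub_norm_sub (hr : LipschitzOnWith K r s) (t : ℝ) (x : E) :
    LipschitzOnWith K (fun τ ↦ t - ‖x - r τ‖) s :=
  LipschitzOnWith.of_dist_le_mul fun a ha b hb ↦ calc
    dist (t - ‖x - r a‖) (t - ‖x - r b‖) = dist ‖x - r a‖ ‖x - r b‖ := dist_sub_left _ _ _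
    _ ≤ dist (x - r a) (x - r b) := (dist_norm_norm_le _ _).trans_eq (dist_eq_norm _ _).symm
    _ = dist (r a) (r b) := dist_sub_left _ _ _
    _ ≤ K * dist a b := hr.dist_le_mul a ha b hb

theorem existsUnique_retardedTime {t : ℝ} (hK : K < 1) (hr : LipschitzOnWith K r (Iic t))
    (x : E) : ∃! τ, τ ≤ t ∧ τ = t - ‖x - r τ‖ := by
  simpa only [IsFixedPt, mem_Iic, eq_comm (b := _ - _)] using
    (hr.const_sub_norm_sub t x).existsUnique_isFixedPt hK isClosed_Iic.isComplete nonempty_Iic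
      fun _ _ ↦ sub_le_self t (norm_nonneg _)

end RetardedTime

theorem stmt_0_general (r₂ : ℝ → EuclideanSpace ℝ (Fin 3)) (t : ℝ) (v₁ : ℝ)
    (hv₁ : v₁ < 1)
    (hlip : ∀ s s' : ℝ, s ≤ t → s' ≤ t → ‖r₂ s - r₂ s'‖ ≤ v₁ * |s - s'|)
    (r₁ : EuclideanSpace ℝ (Fin 3)) :
    ∃! τ : ℝ, τ ≤ t ∧ τ = t - ‖r₁ - r₂ τ‖ := by
  refine existsUnique_retardedTime (Real.toNNReal_lt_one.mpr hv₁) ?_ r₁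
  refine LipschitzOnWith.of_dist_le_mul fun s hs s' hs' ↦ ?_
  rw [dist_eq_norm, Real.dist_eq]
  exact (hlip s s' hs hs').trans <|
    mul_le_mul_of_nonneg_right (Real.le_coe_toNNReal v₁) (abs_nonneg _)

/-- Existence and uniqueness of the retarded time (c = 1). -/
theorem stmt_0 (r₂ : ℝ → EuclideanSpace ℝ (Fin 3)) (t : ℝ) (v₁ : ℝ)
    (hv₀ : 0 ≤ v₁) (hv₁ : v₁ < 1)
    (hlip : ∀ s s' : ℝ, s ≤ t → s' ≤ t → ‖r₂ s - r₂ s'‖ ≤ v₁ * |s - s'|)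
    (r₁ : EuclideanSpace ℝ (Fin 3)) :
    ∃! τ : ℝ, τ ≤ t ∧ τ = t - ‖r₁ - r₂ τ‖ :=
  stmt_0_general r₂ t v₁ hv₁ hlip r₁
end

section
/- Let r₂ : ℝ → ℝ³ be Lipschitz with constant v₁ < 1 on (-∞, t₁). For (r₁, t) with t < t₁ let τ(r₁, t) denote the unique solution of τ = t - |r₁ - r₂(τ)|. Then for all (r₁, t), (r̃₁, t̃) with t, t̃ < t₁: |τ(r₁,t) - τ(r̃₁,t̃)| ≤ (1/(1 - v₁))(|t - t̃| + |r₁ - r̃₁|). In particular τ is continuous on ℝ³ × ℝ. -/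
/-!
Subtracting the two retarded-time equations, the reverse triangle inequality and the
Lipschitz bound on `r₂` give `|Δτ| ≤ |Δt| + ‖Δr₁‖ + v₁ |Δτ|`; since `v₁ < 1` the last term can
be absorbed into the left-hand side.
-/

theorem abs_sub_le_of_eq_sub_norm_sub {E : Type*} [SeminormedAddCommGroup E]
    {γ : ℝ → E} {v t t' s s' : ℝ} {r r' : E}
    (hs : s = t - ‖r - γ s‖) (hs' : s' = t' - ‖r' - γ s'‖)
    (hγ : ‖γ s - γ s'‖ ≤ v * |s - s'|) :
    |s - s'| ≤ |t - t'| + ‖r - r'‖ + v * |s - s'| :=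
  calc |s - s'| = |(t - t') - (‖r - γ s‖ - ‖r' - γ s'‖)| := by congr 1; linarith
    _ ≤ |t - t'| + |‖r - γ s‖ - ‖r' - γ s'‖| := abs_sub _ _
    _ ≤ |t - t'| + ‖(r - r') - (γ s - γ s')‖ := by
      rw [← sub_sub_sub_comm]; gcongr; exact abs_norm_sub_norm_le _ _
    _ ≤ |t - t'| + (‖r - r'‖ + ‖γ s - γ s'‖) := by gcongr; exact norm_sub_le _ _
    _ ≤ |t - t'| + ‖r - r'‖ + v * |s - s'| := by linarith

theorem le_one_div_one_sub_mul_of_le_add_mul {x a v : ℝ} (hv : v < 1) (h : x ≤ a + v * x) :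
    x ≤ 1 / (1 - v) * a := by
  rw [one_div_mul_eq_div, le_div_iff₀ (by linarith)]
  linarith

theorem ContinuousOn.of_dist_le_mul_norm_add {E F α : Type*} [SeminormedAddCommGroup E]
    [SeminormedAddCommGroup F] [PseudoMetricSpace α] {f : E × F → α} {s : Set (E × F)} {C : ℝ}
    (hC : 0 ≤ C) (h : ∀ p ∈ s, ∀ q ∈ s, dist (f p) (f q) ≤ C * (‖p.1 - q.1‖ + ‖p.2 - q.2‖)) :
    ContinuousOn f s := by
  refine (LipschitzOnWith.of_dist_le_mul (K := (2 * C).toNNReal) fun p hp q hq => ?_).continuousOn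
  rw [dist_eq_norm, Real.coe_toNNReal _ (by positivity)]
  calc dist (f p) (f q) ≤ C * (‖p.1 - q.1‖ + ‖p.2 - q.2‖) := h p hp q hq
    _ ≤ C * (‖p - q‖ + ‖p - q‖) := by gcongr; exacts [norm_fst_le (p - q), norm_snd_le (p - q)]
    _ = 2 * C * ‖p - q‖ := by ring

theorem stmt_1_general (r₂ : ℝ → EuclideanSpace ℝ (Fin 3)) (t₁ v₁ : ℝ)
    (hv₁ : v₁ < 1)
    (hlip : ∀ s s' : ℝ, s < t₁ → s' < t₁ → ‖r₂ s - r₂ s'‖ ≤ v₁ * |s - s'|)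
    (τ : EuclideanSpace ℝ (Fin 3) → ℝ → ℝ)
    (hτ : ∀ r₁ t, t < t₁ → τ r₁ t ≤ t ∧ τ r₁ t = t - ‖r₁ - r₂ (τ r₁ t)‖) :
    (∀ (r₁ r₁' : EuclideanSpace ℝ (Fin 3)) (t t' : ℝ), t < t₁ → t' < t₁ →
      |τ r₁ t - τ r₁' t'| ≤ (1 / (1 - v₁)) * (|t - t'| + ‖r₁ - r₁'‖)) ∧
    ContinuousOn (fun p : EuclideanSpace ℝ (Fin 3) × ℝ => τ p.1 p.2)
      {p : EuclideanSpace ℝ (Fin 3) × ℝ | p.2 < t₁} := by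
  have hτ_lip : ∀ (r₁ r₁' : EuclideanSpace ℝ (Fin 3)) (t t' : ℝ), t < t₁ → t' < t₁ →
      |τ r₁ t - τ r₁' t'| ≤ (1 / (1 - v₁)) * (|t - t'| + ‖r₁ - r₁'‖) := by
    intro r₁ r₁' t t' ht ht'
    obtain ⟨hle, heq⟩ := hτ r₁ t ht
    obtain ⟨hle', heq'⟩ := hτ r₁' t' ht'
    exact le_one_div_one_sub_mul_of_le_add_mul hv₁ <| abs_sub_le_of_eq_sub_norm_sub heq heq' <|
      hlip _ _ (hle.trans_lt ht) (hle'.trans_lt ht')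
  refine ⟨hτ_lip, ContinuousOn.of_dist_le_mul_norm_add (C := 1 / (1 - v₁))
    (by have := sub_pos.2 hv₁; positivity) fun p hp q hq => ?_⟩
  rw [Real.dist_eq, Real.norm_eq_abs, add_comm]
  exact hτ_lip _ _ _ _ hp hq

/-- The retarded time field is locally Lipschitzian, hence continuous. -/
theorem stmt_1 (r₂ : ℝ → EuclideanSpace ℝ (Fin 3)) (t₁ v₁ : ℝ)
    (hv₀ : 0 ≤ v₁) (hv₁ : v₁ < 1)
    (hlip : ∀ s s' : ℝ, s < t₁ → s' < t₁ → ‖r₂ s - r₂ s'‖ ≤ v₁ * |s - s'|)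
    (τ : EuclideanSpace ℝ (Fin 3) → ℝ → ℝ)
    (hτ : ∀ r₁ t, t < t₁ → τ r₁ t ≤ t ∧ τ r₁ t = t - ‖r₁ - r₂ (τ r₁ t)‖) :
    (∀ (r₁ r₁' : EuclideanSpace ℝ (Fin 3)) (t t' : ℝ), t < t₁ → t' < t₁ →
      |τ r₁ t - τ r₁' t'| ≤ (1 / (1 - v₁)) * (|t - t'| + ‖r₁ - r₁'‖)) ∧
    ContinuousOn (fun p : EuclideanSpace ℝ (Fin 3) × ℝ => τ p.1 p.2)
      {p : EuclideanSpace ℝ (Fin 3) × ℝ | p.2 < t₁} :=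
  stmt_1_general r₂ t₁ v₁ hv₁ hlip τ hτ
end

section
/- With the fundamental fields on G, the time derivative of z = (1 - ⟨e,v⟩)^{-1} is given by Dz = u z - 2u z² + z³⟨e,a⟩ + u z³ - u z³⟨v,v⟩. -/
open scoped RealInnerProductSpace Topology

/-!
The retarded time `τ` is defined implicitly by `s - τ s = ‖x - r₂ (τ s)‖`. Differentiating the
square of this relation gives `τ' (1 - ⟪e, v⟫) = 1`, i.e. `Dτ = z`; in particular `1 - ⟪e, v⟫`
cannot vanish where `τ` is differentiable. The chain rule then gives `Dv = z a` and
`De = -u e + u z e - u z v`, and `Dz = z² (⟪De, v⟫ + ⟪e, Dv⟫)` reduces to the claimed formula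
using `z (1 - ⟪e, v⟫) = 1`.
-/

section RetardedTime

variable {E : Type*} [NormedAddCommGroup E] [InnerProductSpace ℝ E]
  {r₂ : ℝ → E} {τ : ℝ → ℝ} {x v : E} {t τ' : ℝ}

noncomputable def retardedDir (x : E) (r₂ : ℝ → E) (τ : ℝ → ℝ) (s : ℝ) : E :=
  (s - τ s)⁻¹ • (x - r₂ (τ s))

theorem hasDerivAt_sub_comp_retardedTime (hτ' : HasDerivAt τ τ' t)
    (hr₂ : HasDerivAt r₂ v (τ t)) : HasDerivAt (fun s => x - r₂ (τ s)) (-(τ' • v)) t := by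
  simpa using (hr₂.scomp t hτ').const_sub x

theorem retardedTime_deriv_mul_one_sub_inner
    (hτ : ∀ᶠ s in 𝓝 t, s - τ s = ‖x - r₂ (τ s)‖) (hT : t - τ t ≠ 0)
    (hτ' : HasDerivAt τ τ' t) (hr₂ : HasDerivAt r₂ v (τ t)) :
    τ' * (1 - ⟪retardedDir x r₂ τ t, v⟫) = 1 := by
  have hR := hasDerivAt_sub_comp_retardedTime (x := x) hτ' hr₂
  have hsq : HasDerivAt (fun s => (s - τ s) ^ 2) (2 * ⟪x - r₂ (τ t), -(τ' • v)⟫) t :=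
    hR.norm_sq.congr_of_eventuallyEq (hτ.mono fun s hs => by simp only [hs])
  have hsq' : HasDerivAt (fun s => (s - τ s) ^ 2) (2 * (t - τ t) * (1 - τ')) t := by
    simpa using ((hasDerivAt_id' t).fun_sub hτ').fun_pow 2
  have hderiv_eq := hsq'.unique hsq
  rw [inner_neg_right, real_inner_smul_right] at hderiv_eq
  rw [retardedDir, real_inner_smul_left]
  field_simp
  linear_combination -hderiv_eq / 2

theorem hasDerivAt_retardedDir (hT : t - τ t ≠ 0) (hτ' : HasDerivAt τ τ' t)
    (hr₂ : HasDerivAt r₂ v (τ t)) :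
    HasDerivAt (retardedDir x r₂ τ)
      ((t - τ t)⁻¹ • (-retardedDir x r₂ τ t + τ' • retardedDir x r₂ τ t - τ' • v)) t := by
  have hR := hasDerivAt_sub_comp_retardedTime (x := x) hτ' hr₂
  refine ((((hasDerivAt_id' t).fun_sub hτ').fun_inv hT).smul hR).congr_deriv ?_
  unfold retardedDir
  match_scalars <;> field_simp <;> ring

theorem HasDerivAt.inv_one_sub_inner {f g : ℝ → E} {f' g' : E}
    (hf : HasDerivAt f f' t) (hg : HasDerivAt g g' t) (h : 1 - ⟪f t, g t⟫ ≠ 0) :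
    HasDerivAt (fun s => (1 - ⟪f s, g s⟫)⁻¹)
      ((1 - ⟪f t, g t⟫)⁻¹ ^ 2 * (⟪f', g t⟫ + ⟪f t, g'⟫)) t := by
  refine (((hasDerivAt_const t 1).fun_sub (hf.inner ℝ hg)).fun_inv h).congr_deriv ?_
  rw [add_comm, inv_pow]
  ring

end RetardedTime

theorem stmt_10_general (r₂ : ℝ → EuclideanSpace ℝ (Fin 3)) (hC : ContDiff ℝ 2 r₂)
    (τ : EuclideanSpace ℝ (Fin 3) → ℝ → ℝ)
    (hτ : ∀ x t, τ x t ≤ t ∧ τ x t = t - ‖x - r₂ (τ x t)‖)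
    (r₁ : EuclideanSpace ℝ (Fin 3)) (t : ℝ) (hG : 0 < t - τ r₁ t)
    (hdiff : DifferentiableAt ℝ (fun s => τ r₁ s) t) :
    let u : ℝ := (t - τ r₁ t)⁻¹
    let e : EuclideanSpace ℝ (Fin 3) := (t - τ r₁ t)⁻¹ • (r₁ - r₂ (τ r₁ t))
    let v : EuclideanSpace ℝ (Fin 3) := deriv r₂ (τ r₁ t)
    let a : EuclideanSpace ℝ (Fin 3) := deriv (deriv r₂) (τ r₁ t)
    let z : ℝ := (1 - ⟪e, v⟫)⁻¹
    deriv (fun s =>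
        (1 - ⟪((s - τ r₁ s)⁻¹) • (r₁ - r₂ (τ r₁ s)), deriv r₂ (τ r₁ s)⟫)⁻¹) t =
      u * z - 2 * u * z ^ 2 + z ^ 3 * ⟪e, a⟫ + u * z ^ 3 - u * z ^ 3 * ⟪v, v⟫ := by
  intro u e v a z
  have hT : t - τ r₁ t ≠ 0 := hG.ne'
  have hτ' : HasDerivAt (τ r₁) (deriv (τ r₁) t) t := hdiff.hasDerivAt
  have hv : HasDerivAt r₂ v (τ r₁ t) := (hC.differentiable two_ne_zero _).hasDerivAt
  have hmul : deriv (τ r₁) t * (1 - ⟪e, v⟫) = 1 :=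
    retardedTime_deriv_mul_one_sub_inner
      (.of_forall fun s => by linarith [(hτ r₁ s).2]) hT hτ' hv
  have hc : 1 - ⟪e, v⟫ ≠ 0 := right_ne_zero_of_mul_eq_one hmul
  have hτz : deriv (τ r₁) t = z := eq_inv_of_mul_eq_one_left hmul
  have hDe : HasDerivAt (retardedDir r₁ r₂ (τ r₁)) (u • (-e + z • e - z • v)) t :=
    hτz ▸ hasDerivAt_retardedDir hT hτ' hv
  have hDv : HasDerivAt (fun s => deriv r₂ (τ r₁ s)) (z • a) t :=
    hτz ▸ (hC.differentiable_deriv_two _).hasDerivAt.scomp t hτ'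
  have hz : z * (1 - ⟪e, v⟫) = 1 := inv_mul_cancel₀ hc
  refine (hDe.inv_one_sub_inner hDv hc).deriv.trans ?_
  change z ^ 2 * (⟪u • (-e + z • e - z • v), v⟫ + ⟪e, z • a⟫) = _
  simp only [inner_add_left, inner_sub_left, inner_neg_left, real_inner_smul_left,
    real_inner_smul_right]
  linear_combination (u * z - u * z ^ 2) * hz

/-- Time derivative of z: Dz = uz - 2uz² + z³⟨e,a⟩ + uz³ - uz³⟨v,v⟩. -/
theorem stmt_10 (r₂ : ℝ → EuclideanSpace ℝ (Fin 3)) (hC : ContDiff ℝ 2 r₂)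
    (hspeed : ∀ s : ℝ, ‖deriv r₂ s‖ < 1)
    (τ : EuclideanSpace ℝ (Fin 3) → ℝ → ℝ)
    (hτ : ∀ x t, τ x t ≤ t ∧ τ x t = t - ‖x - r₂ (τ x t)‖)
    (r₁ : EuclideanSpace ℝ (Fin 3)) (t : ℝ) (hG : 0 < t - τ r₁ t)
    (hdiff : DifferentiableAt ℝ (fun s => τ r₁ s) t) :
    let u : ℝ := (t - τ r₁ t)⁻¹
    let e : EuclideanSpace ℝ (Fin 3) := (t - τ r₁ t)⁻¹ • (r₁ - r₂ (τ r₁ t))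
    let v : EuclideanSpace ℝ (Fin 3) := deriv r₂ (τ r₁ t)
    let a : EuclideanSpace ℝ (Fin 3) := deriv (deriv r₂) (τ r₁ t)
    let z : ℝ := (1 - ⟪e, v⟫)⁻¹
    deriv (fun s =>
        (1 - ⟪((s - τ r₁ s)⁻¹) • (r₁ - r₂ (τ r₁ s)), deriv r₂ (τ r₁ s)⟫)⁻¹) t =
      u * z - 2 * u * z ^ 2 + z ^ 3 * ⟪e, a⟫ + u * z ^ 3 - u * z ^ 3 * ⟪v, v⟫ :=
  stmt_10_general r₂ hC τ hτ r₁ t hG hdiff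
end
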